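/- Two softmax policies with nearby preferences induce nearby distributions in total variation: if π and π' are softmax distributions at temperature η > 0 induced by Ψ, Ψ' : A → ℝ on a finite set A with sup_a |Ψ(a) − Ψ'(a)| ≤ ε, then ∑_a |π(a) − π'(a)| ≤ 2·(e^{2ηε} − 1), and in particular the total variation distance tends to 0 as ε → 0. -/
import Mathlib


theorem softmax_total_variation_bound
    {A : Type*} [Fintype A] [Nonempty A]
    (η : ℝ) (hη : 0 < η) (Ψ Ψ' : A → ℝ)
    (ε : ℝ) (hε : 0 ≤ ε) (hdiff : ∀ a, |Ψ a - Ψ' a| ≤ ε)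
    (π π' : A → ℝ)
    (hπ : ∀ a, π a = Real.exp (η * Ψ a) / ∑ a', Real.exp (η * Ψ a'))
    (hπ' : ∀ a, π' a = Real.exp (η * Ψ' a) / ∑ a', Real.exp (η * Ψ' a')) :
    ∑ a, |π a - π' a| ≤ 2 * (Real.exp (2 * η * ε) - 1) := by
  set S : ℝ := ∑ a', Real.exp (η * Ψ a') with hS
  set S' : ℝ := ∑ a', Real.exp (η * Ψ' a') with hS'
  have hSpos : 0 < S := Finset.sum_pos (fun a _ => Real.exp_pos _) Finset.univ_nonempty
  have hS'pos : 0 < S' := Finset.sum_pos (fun a _ => Real.exp_pos _) Finset.univ_nonempty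
  have hE : 1 ≤ Real.exp (η * ε) := Real.one_le_exp (by positivity)
  have key : ∀ (Φ Φ' : A → ℝ), (∀ a, |Φ a - Φ' a| ≤ ε) →
      ∀ a, Real.exp (η * Φ a) ≤ Real.exp (η * ε) * Real.exp (η * Φ' a) := by
    intro Φ Φ' h a
    rw [← Real.exp_add]
    apply Real.exp_le_exp.2
    have h2 := (abs_le.1 (h a)).2
    nlinarith [hη.le]
  have hsum : ∀ (Φ Φ' : A → ℝ), (∀ a, |Φ a - Φ' a| ≤ ε) →
      (∑ a', Real.exp (η * Φ a')) ≤ Real.exp (η * ε) * ∑ a', Real.exp (η * Φ' a') := by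
    intro Φ Φ' h
    rw [Finset.mul_sum]
    exact Finset.sum_le_sum fun a _ => key Φ Φ' h a
  have hdiff' : ∀ a, |Ψ' a - Ψ a| ≤ ε := fun a => by rw [abs_sub_comm]; exact hdiff a
  have he2 : Real.exp (2 * η * ε) = Real.exp (η * ε) * Real.exp (η * ε) := by
    rw [← Real.exp_add]; ring_nf
  have hpt : ∀ (Φ Φ' : A → ℝ) (h : ∀ a, |Φ a - Φ' a| ≤ ε) (a : A),
      Real.exp (η * Φ a) / (∑ a', Real.exp (η * Φ a')) ≤
      Real.exp (2 * η * ε) * (Real.exp (η * Φ' a) / (∑ a', Real.exp (η * Φ' a'))) := by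
    intro Φ Φ' h a
    have hP : 0 < ∑ a', Real.exp (η * Φ a') :=
      Finset.sum_pos (fun a _ => Real.exp_pos _) Finset.univ_nonempty
    have hP' : 0 < ∑ a', Real.exp (η * Φ' a') :=
      Finset.sum_pos (fun a _ => Real.exp_pos _) Finset.univ_nonempty
    rw [mul_div_assoc', div_le_div_iff₀ hP hP', he2]
    have h1 := key Φ Φ' h a
    have h2 := hsum Φ' Φ (fun a => by rw [abs_sub_comm]; exact h a)
    nlinarith [Real.exp_pos (η * Φ a), Real.exp_pos (η * Φ' a), Real.exp_pos (η * ε)]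
  have hπle : ∀ a, π a ≤ Real.exp (2 * η * ε) * π' a := by
    intro a; rw [hπ a, hπ' a]; exact hpt Ψ Ψ' hdiff a
  have hπ'le : ∀ a, π' a ≤ Real.exp (2 * η * ε) * π a := by
    intro a; rw [hπ a, hπ' a]; exact hpt Ψ' Ψ hdiff' a
  have hπnn : ∀ a, 0 ≤ π a := fun a => by
    rw [hπ a]; positivity
  have hπ'nn : ∀ a, 0 ≤ π' a := fun a => by
    rw [hπ' a]; positivity
  have hc : 0 ≤ Real.exp (2 * η * ε) - 1 := by
    have : 1 ≤ Real.exp (2 * η * ε) := Real.one_le_exp (by positivity)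
    linarith
  have hbound : ∀ a, |π a - π' a| ≤ (Real.exp (2 * η * ε) - 1) * (π a + π' a) := by
    intro a
    rw [abs_le]
    constructor
    · nlinarith [hπ'le a, hπnn a, hπ'nn a]
    · nlinarith [hπle a, hπnn a, hπ'nn a]
  have hsum1 : ∑ a, π a = 1 := by
    simp only [hπ]
    rw [← Finset.sum_div, div_self hSpos.ne']
  have hsum1' : ∑ a, π' a = 1 := by
    simp only [hπ']
    rw [← Finset.sum_div, div_self hS'pos.ne']
  calc ∑ a, |π a - π' a| ≤ ∑ a, (Real.exp (2 * η * ε) - 1) * (π a + π' a) :=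
        Finset.sum_le_sum fun a _ => hbound a
    _ = (Real.exp (2 * η * ε) - 1) * ((∑ a, π a) + ∑ a, π' a) := by
        rw [← Finset.mul_sum, Finset.sum_add_distrib]
    _ = 2 * (Real.exp (2 * η * ε) - 1) := by rw [hsum1, hsum1']; ring
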